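/- Let (X,d) be an unbounded metric space and p ∈ X. The following statements are equivalent: (i) the set S_p(X) is strongly porous at infinity; (ii) there is a single-point tangent space Ω_{∞,r̃}^X; (iii) there is a finite tangent space Ω_{∞,r̃}^X; (iv) there is a compact tangent space Ω_{∞,r̃}^X; (v) there is a bounded, separable tangent space Ω_{∞,r̃}^X. -/

import Mathlib

open Filter Topology

/-- A scaling sequence: a sequence of positive reals tending to infinity. -/
def ScalingSeq (r : ℕ → ℝ) : Prop :=
  (∀ n, 0 < r n) ∧ Tendsto r atTop atTop

/-- `x ∈ X̃_{∞,r̃}`: the sequence `x` satisfies `d(x_n,p) → ∞` and the finite limit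
`d̃_r̃(x̃) = lim d(x_n,p)/r_n` exists.  Here `d` is the distance function of the space. -/
def SeqAdm {Y : Type*} (d : Y → Y → ℝ) (p : Y) (r : ℕ → ℝ) (x : ℕ → Y) : Prop :=
  Tendsto (fun n => d (x n) p) atTop atTop ∧
  ∃ L : ℝ, Tendsto (fun n => d (x n) p / r n) atTop (𝓝 L)

/-- The equivalence `x̃ ≡ ỹ ⇔ lim d(x_n,y_n)/r_n = 0`. -/
def SeqEquiv {Y : Type*} (d : Y → Y → ℝ) (r : ℕ → ℝ) (x y : ℕ → Y) : Prop :=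
  Tendsto (fun n => d (x n) (y n) / r n) atTop (𝓝 0)

/-- Mutual stability: the limit `lim d(x_n,y_n)/r_n` exists (and is finite). -/
def MutStable {Y : Type*} (d : Y → Y → ℝ) (r : ℕ → ℝ) (x y : ℕ → Y) : Prop :=
  ∃ L : ℝ, Tendsto (fun n => d (x n) (y n) / r n) atTop (𝓝 L)

/-- A set of sequences representing a clique in the graph `G_{X,r̃}`: all members are
admissible, the set is a union of equivalence classes, and all members are pairwise
mutually stable. -/
def IsCliqueSet {Y : Type*} (d : Y → Y → ℝ) (p : Y) (r : ℕ → ℝ) (C : Set (ℕ → Y)) : Prop :=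
  (∀ x ∈ C, SeqAdm d p r x) ∧
  (∀ x ∈ C, ∀ y, SeqAdm d p r y → SeqEquiv d r x y → y ∈ C) ∧
  (∀ x ∈ C, ∀ y ∈ C, MutStable d r x y)

/-- A pretangent space `Ω^X_{∞,r̃}`, encoded as the (union of the) maximal clique of the
graph `G_{X,r̃}`. -/
def IsPretangent {Y : Type*} (d : Y → Y → ℝ) (p : Y) (r : ℕ → ℝ) (C : Set (ℕ → Y)) : Prop :=
  IsCliqueSet d p r C ∧ ∀ D, IsCliqueSet d p r D → C ⊆ D → D = C

/-- The point `α₀ = α₀(X,r̃)`: the class of admissible sequences with `d̃_r̃(x̃) = 0`. -/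
def alphaZero {Y : Type*} (d : Y → Y → ℝ) (p : Y) (r : ℕ → ℝ) : Set (ℕ → Y) :=
  {x | SeqAdm d p r x ∧ Tendsto (fun n => d (x n) p / r n) atTop (𝓝 0)}

/-- The metric `ρ` of a pretangent space: `ρ(α,β) = lim d(x_n,y_n)/r_n`. -/
noncomputable def seqDist {Y : Type*} (d : Y → Y → ℝ) (r : ℕ → ℝ) (x y : ℕ → Y) : ℝ :=
  limUnder atTop (fun n => d (x n) (y n) / r n)

/-- The image `em'(C)` of a clique `C` of `G_{X,r̃}` in `G_{X,r̃'}` (as a union of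
equivalence classes), where `r̃' = (r_{n_k})`. -/
def subImage {Y : Type*} (d : Y → Y → ℝ) (p : Y) (r' : ℕ → ℝ) (nk : ℕ → ℕ)
    (C : Set (ℕ → Y)) : Set (ℕ → Y) :=
  {y | SeqAdm d p r' y ∧ ∃ x ∈ C, SeqEquiv d r' (fun k => x (nk k)) y}

/-- A pretangent space `Ω^X_{∞,r̃}` is tangent if `em'(Ω^X_{∞,r̃})` is a maximal clique
of `G_{X,r̃'}` for every infinite strictly increasing `(n_k) ⊆ ℕ`. -/
def IsTangent {Y : Type*} (d : Y → Y → ℝ) (p : Y) (r : ℕ → ℝ) (C : Set (ℕ → Y)) : Prop :=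
  IsPretangent d p r C ∧
  ∀ nk : ℕ → ℕ, StrictMono nk →
    IsPretangent d p (fun k => r (nk k)) (subImage d p (fun k => r (nk k)) nk C)


/-- `l(∞,h,E)`: the length of the longest interval contained in `[0,h] \ E`. -/
noncomputable def gapLen (E : Set ℝ) (h : ℝ) : ℝ :=
  sSup {d : ℝ | ∃ a b : ℝ, a ≤ b ∧ d = b - a ∧ Set.Ioo a b ⊆ Set.Icc 0 h \ E}

/-- The porosity of `E ⊆ ℝ⁺` at infinity: `p(E,∞) = limsup_{h→∞} l(∞,h,E)/h`. -/
noncomputable def porosityAtInfty (E : Set ℝ) : ℝ :=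
  Filter.limsup (fun h => gapLen E h / h) atTop

/-- `E` is strongly porous at infinity if `p(E,∞) = 1`. -/
def StronglyPorousAtInfty (E : Set ℝ) : Prop :=
  porosityAtInfty E = 1

/-!
Write `S = S_p(X)`. If `S` is strongly porous at infinity, it has gaps `(a_n, b_n)` with
`a_n → ∞` and `b_n / a_n → ∞`. For the intermediate scale `r_n = a_n √(b_n / a_n)` the gaps
rescaled by any subsequence of `r` shrink to `0` on the left and escape to `∞` on the right, so
every convergent normalized distance `d(x_k, p) / r_{n_k}` tends to `0`: along every
subsequence all admissible sequences are equivalent, and the class `α₀` is a single-point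
tangent space. Single-point ⇒ finite ⇒ compact ⇒ bounded and separable hold for any clique with
the pseudometric `ρ`.

Conversely, if `S` is not strongly porous, every interval `(c b, b)` with `b` large meets `S`.
Given a tangent space of diameter `M` with a point at distance `L` from `p`, this yields a
sequence `y` with `d(y_n, p) / r_n` trapped in `(c t, t)`, where `c t = M + L + 1`. Along a
subsequence `φ`, `y` is mutually stable with a countable dense family, hence (by density) with the
whole image of the tangent space. Maximality of that image forces `y ∘ φ` to be equivalent to
`w ∘ φ` for a point `w` of the tangent space, but `w` is at distance `≤ M + L` from `p` while
`y ∘ φ` stays beyond `M + L + 1`.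
-/

open Set

lemma div_le_div_add_div {a b c ρ : ℝ} (h : a ≤ b + c) (hρ : 0 < ρ) :
    a / ρ ≤ b / ρ + c / ρ := by
  rw [← add_div]
  exact div_le_div_of_nonneg_right h hρ.le

lemma dist_div_div_of_pos {a b ρ : ℝ} (hρ : 0 < ρ) : dist (a / ρ) (b / ρ) = dist a b / ρ := by
  rw [Real.dist_eq, Real.dist_eq, ← sub_div, abs_div, abs_of_pos hρ]

lemma Equivalence.exists_infinite_class {α : Type*} [Infinite α] {R : α → α → Prop}
    (hR : Equivalence R) {n : ℕ} (hn : ∀ f : Fin (n + 1) → α, ∃ k l, k ≠ l ∧ R (f k) (f l)) :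
    ∃ a, {b | R b a}.Infinite := by
  let s : Setoid α := ⟨R, hR⟩
  have : Finite (Quotient s) := by
    by_contra hfin
    have : Infinite (Quotient s) := not_finite_iff_infinite.1 hfin
    let e := Infinite.natEmbedding (Quotient s)
    obtain ⟨k, l, hkl, hRkl⟩ := hn fun k => (e k).out
    exact hkl (Fin.val_injective (e.injective (Quotient.out_equiv_out.1 hRkl)))
  obtain ⟨q, hq⟩ := Finite.exists_infinite_fiber (Quotient.mk s)
  refine ⟨q.out, ?_⟩
  convert infinite_coe_iff.1 hq using 1
  ext b
  exact (Quotient.mk_eq_iff_out (s := s)).symm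

lemma cauchySeq_of_forall_eventually_dist_lt {α : Type*} [PseudoMetricSpace α] {f : ℕ → α}
    (h : ∀ ε > 0, ∃ g : ℕ → α, CauchySeq g ∧ ∀ᶠ n in atTop, dist (f n) (g n) < ε) :
    CauchySeq f := by
  refine Metric.cauchySeq_iff.2 fun ε hε => ?_
  obtain ⟨g, hg, hfg⟩ := h (ε / 3) (by positivity)
  obtain ⟨N₁, hN₁⟩ := Metric.cauchySeq_iff.1 hg (ε / 3) (by positivity)
  obtain ⟨N₂, hN₂⟩ := eventually_atTop.1 hfg
  refine ⟨max N₁ N₂, fun m hm n hn => ?_⟩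
  have h₁ := hN₂ m (le_of_max_le_right hm)
  have h₂ := hN₁ m (le_of_max_le_left hm) n (le_of_max_le_left hn)
  have h₃ := hN₂ n (le_of_max_le_right hn)
  rw [dist_comm] at h₃
  linarith [dist_triangle4 (f m) (g m) (g n) (f n)]

lemma exists_strictMono_forall_tendsto {ι : Type*} [Countable ι] (g : ι → ℕ → ℝ)
    (hg : ∀ i, Bornology.IsBounded (range (g i))) :
    ∃ φ : ℕ → ℕ, StrictMono φ ∧ ∀ i, ∃ ℓ, Tendsto (fun k => g i (φ k)) atTop (𝓝 ℓ) := by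
  have hK : IsCompact (univ.pi fun i => closure (range (g i))) :=
    isCompact_univ_pi fun i => (hg i).isCompact_closure
  obtain ⟨ℓ, -, φ, hφ, hlim⟩ :=
    hK.tendsto_subseq (x := fun n i => g i n) fun n => mem_univ_pi.2 fun i => subset_closure ⟨n, rfl⟩
  exact ⟨φ, hφ, fun i => ⟨ℓ i, tendsto_pi_nhds.1 hlim i⟩⟩

lemma eq_zero_of_tendsto_div_of_notMem_Ioo {s ρ a b : ℕ → ℝ} {L : ℝ} (hs : ∀ k, 0 ≤ s k)
    (hρ : ∀ k, 0 < ρ k) (hgap : ∀ k, s k ∉ Ioo (a k) (b k))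
    (ha : Tendsto (fun k => a k / ρ k) atTop (𝓝 0)) (hb : Tendsto (fun k => b k / ρ k) atTop atTop)
    (hL : Tendsto (fun k => s k / ρ k) atTop (𝓝 L)) : L = 0 := by
  have hle : ∀ᶠ k in atTop, s k / ρ k ≤ a k / ρ k := by
    filter_upwards [hL.eventually_lt_const (lt_add_one L), hb.eventually_gt_atTop (L + 1)]
      with k h₁ h₂
    have hsb : s k < b k := (div_lt_div_iff_of_pos_right (hρ k)).1 (h₁.trans h₂)
    have hsa : s k ≤ a k := by
      by_contra! hsa
      exact hgap k ⟨hsa, hsb⟩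
    exact div_le_div_of_nonneg_right hsa (hρ k).le
  exact le_antisymm (le_of_tendsto_of_tendsto hL ha hle)
    (ge_of_tendsto' hL fun k => div_nonneg (hs k) (hρ k).le)

section Porosity

variable {E : Set ℝ} {a b c h : ℝ}

lemma le_and_le_of_Ioo_subset_Icc {d : ℝ} (hab : a < b) (hsub : Ioo a b ⊆ Icc c d) :
    c ≤ a ∧ b ≤ d := by
  simpa [closure_Ioo hab.ne, Icc_subset_Icc_iff hab.le] using closure_mono hsub

lemma sub_le_of_Ioo_subset_Icc (hab : a ≤ b) (hsub : Ioo a b ⊆ Icc 0 h) : b - a ≤ max h 0 := by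
  rcases hab.eq_or_lt with rfl | hlt
  · simp
  · linarith [le_and_le_of_Ioo_subset_Icc hlt hsub, le_max_left h 0]

lemma bddAbove_gapLen_set (E : Set ℝ) (h : ℝ) :
    BddAbove {d : ℝ | ∃ a b : ℝ, a ≤ b ∧ d = b - a ∧ Ioo a b ⊆ Icc 0 h \ E} := by
  refine ⟨max h 0, ?_⟩
  rintro _ ⟨a, b, hab, rfl, hsub⟩
  exact sub_le_of_Ioo_subset_Icc hab (hsub.trans sdiff_subset)

lemma sub_le_gapLen (hab : a ≤ b) (hsub : Ioo a b ⊆ Icc 0 h \ E) : b - a ≤ gapLen E h :=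
  le_csSup (bddAbove_gapLen_set E h) ⟨a, b, hab, rfl, hsub⟩

lemma gapLen_nonneg (E : Set ℝ) (h : ℝ) : 0 ≤ gapLen E h := by
  simpa using sub_le_gapLen (E := E) (h := h) (le_refl (0 : ℝ)) (by simp)

lemma gapLen_le (E : Set ℝ) (hh : 0 ≤ h) : gapLen E h ≤ h := by
  unfold gapLen
  refine csSup_le ⟨0, 0, 0, le_rfl, by simp, by simp⟩ ?_
  rintro _ ⟨a, b, hab, rfl, hsub⟩
  simpa [max_eq_left hh] using sub_le_of_Ioo_subset_Icc hab (hsub.trans sdiff_subset)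

lemma exists_gap_of_lt_gapLen (hc : c < gapLen E h) :
    ∃ a b, Ioo a b ⊆ Icc 0 h \ E ∧ c < b - a := by
  unfold gapLen at hc
  obtain ⟨_, ⟨a, b, -, rfl, hsub⟩, hlt⟩ :=
    exists_lt_of_lt_csSup (by exact ⟨0, 0, 0, le_rfl, by simp, by simp⟩) hc
  exact ⟨a, b, hsub, hlt⟩

lemma isBoundedUnder_le_gapLen_div (E : Set ℝ) :
    atTop.IsBoundedUnder (· ≤ ·) fun h => gapLen E h / h := by
  refine ⟨1, eventually_map.2 ?_⟩
  filter_upwards [eventually_gt_atTop 0] with h hh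
  exact div_le_one_of_le₀ (gapLen_le E hh.le) hh.le

lemma isCoboundedUnder_le_gapLen_div (E : Set ℝ) :
    atTop.IsCoboundedUnder (· ≤ ·) fun h => gapLen E h / h := by
  refine IsBoundedUnder.isCoboundedUnder_le ⟨0, eventually_map.2 ?_⟩
  filter_upwards [eventually_gt_atTop 0] with h hh
  exact div_nonneg (gapLen_nonneg E h) hh.le

lemma porosityAtInfty_le_one (E : Set ℝ) : porosityAtInfty E ≤ 1 := by
  refine limsup_le_of_le (isCoboundedUnder_le_gapLen_div E) ?_
  filter_upwards [eventually_gt_atTop 0] with h hh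
  exact div_le_one_of_le₀ (gapLen_le E hh.le) hh.le

lemma StronglyPorousAtInfty.exists_gap (hE : StronglyPorousAtInfty E) {ε : ℝ} (hε : 0 < ε)
    (H : ℝ) : ∃ a b, H ≤ b ∧ a ≤ ε * b ∧ Disjoint (Ioo a b) E := by
  set δ := min ε 1 / 2 with hδ
  have hδ0 : 0 < δ := by positivity
  have hδ1 : δ ≤ 1 / 2 := by linarith [min_le_right ε 1]
  have hδε : 2 * δ ≤ ε := by linarith [min_le_left ε 1]
  have hfreq : ∃ᶠ h in atTop, 1 - δ < gapLen E h / h :=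
    frequently_lt_of_lt_limsup (isCoboundedUnder_le_gapLen_div E)
      (show 1 - δ < porosityAtInfty E by rw [hE]; linarith)
  obtain ⟨h, hgap, hh⟩ := (hfreq.and_eventually (eventually_ge_atTop (max (2 * H) 1))).exists
  have hh1 : 1 ≤ h := le_of_max_le_right hh
  obtain ⟨a, b, hsub, hlen⟩ := exists_gap_of_lt_gapLen ((lt_div_iff₀ (by linarith)).1 hgap)
  have hab : a < b := by nlinarith
  obtain ⟨ha, hb⟩ := le_and_le_of_Ioo_subset_Icc hab (hsub.trans sdiff_subset)
  -- the gap is longer than `(1 - δ) h ≥ h / 2`, so it reaches beyond `h / 2` and starts below `δ h`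
  have hb2 : h < 2 * b := by nlinarith
  refine ⟨a, b, by linarith [le_max_left (2 * H) 1], by nlinarith, (subset_sdiff.1 hsub).2⟩

lemma StronglyPorousAtInfty.exists_gap_seq (hE : StronglyPorousAtInfty E) (hunb : ¬ BddAbove E) :
    ∃ a b : ℕ → ℝ, (∀ n, 0 < a n) ∧ Tendsto a atTop atTop ∧ (∀ n : ℕ, ((n : ℝ) + 1) * a n ≤ b n) ∧
      ∀ n, Disjoint (Ioo (a n) (b n)) E := by
  choose a b hb hab hdisj using fun n : ℕ => hE.exists_gap (ε := 1 / (n + 1)) (by positivity) (n + 1)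
  have hbtop : Tendsto b atTop atTop :=
    tendsto_atTop_mono hb (tendsto_atTop_add_const_right _ 1 tendsto_natCast_atTop_atTop)
  have hatop : Tendsto a atTop atTop := by
    refine tendsto_atTop.2 fun R => ?_
    obtain ⟨s, hs, hRs⟩ := not_bddAbove_iff.1 hunb R
    filter_upwards [hbtop.eventually_gt_atTop s] with n hn
    have hsa : s ≤ a n := by
      by_contra! hsa
      exact disjoint_left.1 (hdisj n) ⟨hsa, hn⟩ hs
    linarith
  refine ⟨fun n => max (a n) 1, b, fun n => by positivity,
    tendsto_atTop_mono (fun n => le_max_left _ _) hatop, fun n => ?_,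
    fun n => (hdisj n).mono_left (Ioo_subset_Ioo_left (le_max_left _ _))⟩
  have hn : (0 : ℝ) < n + 1 := by positivity
  rw [mul_max_of_nonneg _ _ hn.le, mul_one]
  refine max_le ?_ (hb n)
  have := hab n
  rw [one_div, ← div_eq_inv_mul, le_div_iff₀ hn] at this
  linarith

lemma StronglyPorousAtInfty.exists_scalingSeq_gaps (hE : StronglyPorousAtInfty E)
    (hunb : ¬ BddAbove E) :
    ∃ r a b : ℕ → ℝ, ScalingSeq r ∧ Tendsto (fun n => a n / r n) atTop (𝓝 0) ∧
      Tendsto (fun n => b n / r n) atTop atTop ∧ ∀ n, Disjoint (Ioo (a n) (b n)) E := by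
  obtain ⟨a, b, ha0, hatop, hab, hdisj⟩ := hE.exists_gap_seq hunb
  have hba : ∀ n : ℕ, (n : ℝ) + 1 ≤ b n / a n := fun n => (le_div_iff₀ (ha0 n)).2 (hab n)
  set q : ℕ → ℝ := fun n => √(b n / a n) with hq
  have hq1 : ∀ n, 1 ≤ q n := fun n =>
    Real.one_le_sqrt.2 (le_trans (by linarith [(n.cast_nonneg : (0 : ℝ) ≤ n)]) (hba n))
  have hqtop : Tendsto q atTop atTop := Real.tendsto_sqrt_atTop.comp <|
    tendsto_atTop_mono hba (tendsto_atTop_add_const_right _ 1 tendsto_natCast_atTop_atTop)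
  refine ⟨fun n => a n * q n, a, b, ⟨fun n => by nlinarith [ha0 n, hq1 n], ?_⟩, ?_, ?_, hdisj⟩
  · exact tendsto_atTop_mono (fun n => le_mul_of_one_le_right (ha0 n).le (hq1 n)) hatop
  · refine (tendsto_inv_atTop_zero.comp hqtop).congr fun n => ?_
    rw [Function.comp_apply]
    field_simp [(ha0 n).ne']
  · refine hqtop.congr fun n => ?_
    rw [← div_div, hq, Real.div_sqrt]

lemma exists_forall_Ioo_inter_nonempty (hE : ¬ StronglyPorousAtInfty E) :
    ∃ c > 0, ∃ H, ∀ b ≥ H, (Ioo (c * b) b ∩ E).Nonempty := by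
  by_contra! hgap
  refine hE (le_antisymm (porosityAtInfty_le_one E) (le_of_forall_pos_le_add fun ε hε => ?_))
  set c := min ε 1
  have hc0 : 0 < c := by positivity
  have hfreq : ∃ᶠ h in atTop, 1 - c ≤ gapLen E h / h := by
    refine frequently_atTop.2 fun H => ?_
    obtain ⟨b, hb, hempty⟩ := hgap c hc0 (max H 1)
    have hb0 : 0 < b := by linarith [le_max_right H 1]
    have hsub : Ioo (c * b) b ⊆ Icc 0 b \ E := fun z hz =>
      ⟨⟨by nlinarith [hz.1], hz.2.le⟩, fun hzE => (eq_empty_iff_forall_notMem.1 hempty) z ⟨hz, hzE⟩⟩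
    have hlen := sub_le_gapLen (by nlinarith [min_le_right ε 1]) hsub
    exact ⟨b, le_of_max_le_left hb, (le_div_iff₀ hb0).2 (by linarith)⟩
  have hp : 1 - c ≤ porosityAtInfty E :=
    le_limsup_of_frequently_le hfreq (isBoundedUnder_le_gapLen_div E)
  linarith [min_le_left ε 1]

end Porosity

section Sequences

variable {X : Type*} [PseudoMetricSpace X] {p : X} {r : ℕ → ℝ} {C : Set (ℕ → X)}
  {x y z : ℕ → X}

lemma seqEquiv_refl (x : ℕ → X) : SeqEquiv dist r x x := by
  simp [SeqEquiv]

lemma SeqEquiv.symm (h : SeqEquiv dist r x y) : SeqEquiv dist r y x := by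
  simpa only [SeqEquiv, dist_comm] using h

lemma SeqEquiv.trans (hr : ∀ n, 0 < r n) (hxy : SeqEquiv dist r x y)
    (hyz : SeqEquiv dist r y z) : SeqEquiv dist r x z :=
  squeeze_zero (fun n => div_nonneg dist_nonneg (hr n).le)
    (fun n => div_le_div_add_div (dist_triangle _ _ _) (hr n)) (by simpa using hxy.add hyz)

lemma MutStable.symm (h : MutStable dist r x y) : MutStable dist r y x := by
  obtain ⟨L, hL⟩ := h
  exact ⟨L, by simpa only [dist_comm] using hL⟩

lemma SeqEquiv.seqDist_eq_zero (h : SeqEquiv dist r x y) : seqDist dist r x y = 0 :=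
  h.limUnder_eq

lemma tendsto_dist_div_of_seqEquiv (hr : ∀ n, 0 < r n) {x' y' : ℕ → X} {L : ℝ}
    (h : Tendsto (fun n => dist (x n) (y n) / r n) atTop (𝓝 L)) (hx : SeqEquiv dist r x x')
    (hy : SeqEquiv dist r y y') : Tendsto (fun n => dist (x' n) (y' n) / r n) atTop (𝓝 L) := by
  refine h.congr_dist (squeeze_zero (fun n => dist_nonneg) (fun n => ?_) (by simpa using hx.add hy))
  rw [dist_div_div_of_pos (hr n), ← add_div]
  exact div_le_div_of_nonneg_right (dist_dist_dist_le _ _ _ _) (hr n).le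

lemma seqDist_self (r : ℕ → ℝ) (x : ℕ → X) : seqDist dist r x x = 0 :=
  (seqEquiv_refl x).seqDist_eq_zero

lemma seqDist_comm (r : ℕ → ℝ) (x y : ℕ → X) : seqDist dist r x y = seqDist dist r y x := by
  simp only [seqDist, dist_comm]

lemma IsCliqueSet.tendsto_seqDist (hC : IsCliqueSet dist p r C) (hx : x ∈ C) (hy : y ∈ C) :
    Tendsto (fun n => dist (x n) (y n) / r n) atTop (𝓝 (seqDist dist r x y)) := by
  obtain ⟨L, hL⟩ := hC.2.2 x hx y hy
  rwa [seqDist, hL.limUnder_eq]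

lemma IsCliqueSet.seqDist_triangle (hr : ∀ n, 0 < r n) (hC : IsCliqueSet dist p r C)
    (hx : x ∈ C) (hy : y ∈ C) (hz : z ∈ C) :
    seqDist dist r x z ≤ seqDist dist r x y + seqDist dist r y z :=
  le_of_tendsto_of_tendsto' (hC.tendsto_seqDist hx hz)
    ((hC.tendsto_seqDist hx hy).add (hC.tendsto_seqDist hy hz))
    fun n => div_le_div_add_div (dist_triangle _ _ _) (hr n)

lemma IsPretangent.mem_of_forall_mutStable (hr : ∀ n, 0 < r n) (hC : IsPretangent dist p r C)
    (hy : SeqAdm dist p r y) (hst : ∀ x ∈ C, MutStable dist r x y) : y ∈ C := by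
  have hst' : ∀ x ∈ C, ∀ z, SeqEquiv dist r y z → MutStable dist r x z := fun x hx z hz =>
    let ⟨L, hL⟩ := hst x hx
    ⟨L, tendsto_dist_div_of_seqEquiv hr hL (seqEquiv_refl x) hz⟩
  set D := C ∪ {z | SeqAdm dist p r z ∧ SeqEquiv dist r y z}
  have hD : IsCliqueSet dist p r D := by
    refine ⟨?_, ?_, ?_⟩
    · rintro x (hx | hx)
      exacts [hC.1.1 x hx, hx.1]
    · rintro x (hx | hx) z hz hxz
      exacts [Or.inl (hC.1.2.1 x hx z hz hxz), Or.inr ⟨hz, hx.2.trans hr hxz⟩]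
    · rintro x (hx | hx) z (hz | hz)
      exacts [hC.1.2.2 x hx z hz, hst' x hx z hz.2, (hst' z hz x hx.2).symm,
        ⟨0, hx.2.symm.trans hr hz.2⟩]
  rw [← hC.2 D hD subset_union_left]
  exact Or.inr ⟨hy, seqEquiv_refl y⟩

lemma IsPretangent.nonempty (hr : ∀ n, 0 < r n) (hC : IsPretangent dist p r C)
    (hy : SeqAdm dist p r y) : C.Nonempty := by
  by_contra hne
  rw [not_nonempty_iff_eq_empty] at hne
  simpa [hne] using hC.mem_of_forall_mutStable hr hy (by simp [hne])

lemma IsTangent.exists_seqEquiv_of_forall_mutStable (hr : ∀ n, 0 < r n)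
    (hC : IsTangent dist p r C) {φ : ℕ → ℕ} (hφ : StrictMono φ)
    (hy : SeqAdm dist p (fun k => r (φ k)) y)
    (hst : ∀ w ∈ C, MutStable dist (fun k => r (φ k)) (fun k => w (φ k)) y) :
    ∃ w ∈ C, SeqEquiv dist (fun k => r (φ k)) (fun k => w (φ k)) y := by
  refine ((hC.2 φ hφ).mem_of_forall_mutStable (fun k => hr (φ k)) hy ?_).2
  rintro z ⟨-, w, hw, hwz⟩
  obtain ⟨L, hL⟩ := hst w hw
  exact ⟨L, tendsto_dist_div_of_seqEquiv (fun k => hr (φ k)) hL hwz (seqEquiv_refl y)⟩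

lemma seqEquiv_of_mem_alphaZero (hr : ∀ n, 0 < r n) (hx : x ∈ alphaZero dist p r)
    (hy : y ∈ alphaZero dist p r) : SeqEquiv dist r x y :=
  squeeze_zero (fun n => div_nonneg dist_nonneg (hr n).le)
    (fun n => div_le_div_add_div (dist_triangle_right _ _ _) (hr n)) (by simpa using hx.2.add hy.2)

lemma isCliqueSet_alphaZero (hr : ∀ n, 0 < r n) : IsCliqueSet dist p r (alphaZero dist p r) :=
  ⟨fun _ hx => hx.1,
    fun _ hx _ hy hxy => ⟨hy, tendsto_dist_div_of_seqEquiv hr hx.2 hxy (seqEquiv_refl _)⟩,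
    fun _ hx _ hy => ⟨0, seqEquiv_of_mem_alphaZero hr hx hy⟩⟩

lemma isPretangent_alphaZero (hr : ∀ n, 0 < r n)
    (hall : ∀ x, SeqAdm dist p r x → x ∈ alphaZero dist p r) :
    IsPretangent dist p r (alphaZero dist p r) :=
  ⟨isCliqueSet_alphaZero hr, fun _ hD hsub => Subset.antisymm (fun x hx => hall x (hD.1 x hx)) hsub⟩

lemma subImage_alphaZero (hr : ∀ n, 0 < r n) {nk : ℕ → ℕ} (hnk : StrictMono nk)
    {w : ℕ → X} (hw : w ∈ alphaZero dist p r)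
    (hall : ∀ x, SeqAdm dist p (fun k => r (nk k)) x → x ∈ alphaZero dist p (fun k => r (nk k))) :
    subImage dist p (fun k => r (nk k)) nk (alphaZero dist p r) =
      alphaZero dist p (fun k => r (nk k)) := by
  have htop := hnk.tendsto_atTop
  have hwk : (fun k => w (nk k)) ∈ alphaZero dist p (fun k => r (nk k)) :=
    ⟨⟨hw.1.1.comp htop, 0, hw.2.comp htop⟩, hw.2.comp htop⟩
  ext y
  exact ⟨fun hy => hall y hy.1,
    fun hy => ⟨hy.1, w, hw, seqEquiv_of_mem_alphaZero (fun k => hr (nk k)) hwk hy⟩⟩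

lemma isTangent_alphaZero (hr : ∀ n, 0 < r n) (hne : (alphaZero dist p r).Nonempty)
    (hall : ∀ nk : ℕ → ℕ, StrictMono nk → ∀ x, SeqAdm dist p (fun k => r (nk k)) x →
      x ∈ alphaZero dist p (fun k => r (nk k))) :
    IsTangent dist p r (alphaZero dist p r) := by
  obtain ⟨w, hw⟩ := hne
  refine ⟨isPretangent_alphaZero hr (hall id strictMono_id), fun nk hnk => ?_⟩
  rw [subImage_alphaZero hr hnk hw (hall nk hnk)]
  exact isPretangent_alphaZero (fun k => hr (nk k)) (hall nk hnk)

end Sequences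

section Unbounded

variable {X : Type*} [PseudoMetricSpace X] {r : ℕ → ℝ}

lemma not_bddAbove_range_dist (hX : ¬ Bornology.IsBounded (univ : Set X)) (p : X) :
    ¬ BddAbove (range fun x => dist x p) := by
  rintro ⟨R, hR⟩
  exact hX ((Metric.isBounded_iff_subset_closedBall p).2 ⟨R, fun x _ => hR ⟨x, rfl⟩⟩)

lemma exists_tendsto_dist_atTop_le (hX : ¬ Bornology.IsBounded (univ : Set X)) (p : X)
    {f : ℕ → ℝ} (hf0 : ∀ n, 0 ≤ f n) (hf : Tendsto f atTop atTop) :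
    ∃ w : ℕ → X, Tendsto (fun n => dist (w n) p) atTop atTop ∧ ∀ n, dist (w n) p ≤ f n := by
  have hfar : ∀ m : ℕ, ∃ x : X, (m : ℝ) ≤ dist x p ∧ (m = 0 → x = p) := by
    intro m
    rcases eq_or_ne m 0 with rfl | hm
    · exact ⟨p, by simp, fun _ => rfl⟩
    · obtain ⟨_, ⟨x, rfl⟩, hx⟩ := not_bddAbove_iff.1 (not_bddAbove_range_dist hX p) m
      exact ⟨x, hx.le, fun h => absurd h hm⟩
  choose q hq hq0 using hfar
  set k : ℕ → ℕ := fun n => Nat.findGreatest (fun m => dist (q m) p ≤ f n) n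
  refine ⟨fun n => q (k n), tendsto_atTop.2 fun R => ?_, fun n => ?_⟩
  · obtain ⟨m, hm⟩ := exists_nat_ge R
    filter_upwards [hf.eventually_ge_atTop (dist (q m) p), eventually_ge_atTop m] with n hfn hmn
    calc R ≤ m := hm
      _ ≤ k n := Nat.cast_le.2 (Nat.le_findGreatest hmn hfn)
      _ ≤ dist (q (k n)) p := hq _
  · exact Nat.findGreatest_spec (P := fun m => dist (q m) p ≤ f n) (Nat.zero_le n)
      (by simpa [hq0 0 rfl] using hf0 n)

lemma alphaZero_nonempty (hX : ¬ Bornology.IsBounded (univ : Set X)) (p : X)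
    (hr : ScalingSeq r) : (alphaZero dist p r).Nonempty := by
  have hsqrt : Tendsto (fun n => √(r n)) atTop atTop := Real.tendsto_sqrt_atTop.comp hr.2
  obtain ⟨w, hw, hwle⟩ :=
    exists_tendsto_dist_atTop_le hX p (fun n => Real.sqrt_nonneg (r n)) hsqrt
  have h0 : Tendsto (fun n => dist (w n) p / r n) atTop (𝓝 0) := by
    refine squeeze_zero (fun n => div_nonneg dist_nonneg (hr.1 n).le) (fun n => ?_)
      (tendsto_inv_atTop_zero.comp hsqrt)
    calc dist (w n) p / r n ≤ √(r n) / r n := div_le_div_of_nonneg_right (hwle n) (hr.1 n).le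
      _ = (√(r n))⁻¹ := by rw [Real.sqrt_div_self', one_div]
  exact ⟨w, ⟨hw, 0, h0⟩, h0⟩

theorem exists_singlePoint_tangent_of_stronglyPorous
    (hX : ¬ Bornology.IsBounded (univ : Set X)) (p : X)
    (hS : StronglyPorousAtInfty (range fun x : X => dist x p)) :
    ∃ r : ℕ → ℝ, ScalingSeq r ∧ ∃ C : Set (ℕ → X), IsTangent dist p r C ∧
      C.Nonempty ∧ ∀ x ∈ C, ∀ y ∈ C, SeqEquiv dist r x y := by
  obtain ⟨r, a, b, hr, ha, hb, hgap⟩ := hS.exists_scalingSeq_gaps (not_bddAbove_range_dist hX p)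
  have hall : ∀ nk : ℕ → ℕ, StrictMono nk → ∀ x, SeqAdm dist p (fun k => r (nk k)) x →
      x ∈ alphaZero dist p (fun k => r (nk k)) := by
    rintro nk hnk x ⟨hx, L, hL⟩
    have htop := hnk.tendsto_atTop
    obtain rfl : L = 0 := eq_zero_of_tendsto_div_of_notMem_Ioo (fun k => dist_nonneg)
      (fun k => hr.1 (nk k)) (fun k => disjoint_right.1 (hgap (nk k)) ⟨x k, rfl⟩)
      (ha.comp htop) (hb.comp htop) hL
    exact ⟨⟨hx, 0, hL⟩, hL⟩
  have hne := alphaZero_nonempty hX p hr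
  exact ⟨r, hr, alphaZero dist p r, isTangent_alphaZero hr.1 hne hall, hne,
    fun x hx y hy => seqEquiv_of_mem_alphaZero hr.1 hx hy⟩

end Unbounded

section Compactness

variable {X : Type*} [PseudoMetricSpace X] {p : X} {r : ℕ → ℝ} {C : Set (ℕ → X)}

lemma exists_subseq_seqDist_tendsto_zero (hr : ∀ n, 0 < r n) {n : ℕ}
    (hn : ∀ f : Fin (n + 1) → (ℕ → X), (∀ k, f k ∈ C) →
      ∃ k l, k ≠ l ∧ SeqEquiv dist r (f k) (f l))
    (u : ℕ → (ℕ → X)) (hu : ∀ j, u j ∈ C) :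
    ∃ v ∈ C, ∃ φ : ℕ → ℕ, StrictMono φ ∧
      Tendsto (fun j => seqDist dist r (u (φ j)) v) atTop (𝓝 0) := by
  have hR : Equivalence fun i j => SeqEquiv dist r (u i) (u j) :=
    ⟨fun i => seqEquiv_refl (u i), SeqEquiv.symm, fun hij hjk => hij.trans hr hjk⟩
  obtain ⟨j, hj⟩ := hR.exists_infinite_class fun f => hn (u ∘ f) fun k => hu (f k)
  obtain ⟨φ, hφ, hφj⟩ := extraction_of_frequently_atTop (Nat.frequently_atTop_iff_infinite.2 hj)
  refine ⟨u j, hu j, φ, hφ, ?_⟩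
  simp only [fun i => (hφj i).seqDist_eq_zero, tendsto_const_nhds]

/-- A type synonym for `C`, so that the pseudometric `ρ` does not clash with the topology that
`C` inherits from the product `ℕ → X`. -/
def CliqueSpace (C : Set (ℕ → X)) : Type _ := C

@[reducible] noncomputable def IsCliqueSet.pseudoMetricSpace (hr : ∀ n, 0 < r n)
    (hC : IsCliqueSet dist p r C) : PseudoMetricSpace (CliqueSpace C) where
  dist x y := seqDist dist r x.1 y.1
  dist_self x := seqDist_self r x.1
  dist_comm x y := seqDist_comm r x.1 y.1
  dist_triangle x y z := hC.seqDist_triangle hr x.2 y.2 z.2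

theorem IsCliqueSet.bounded_and_separable_of_seqCompact (hr : ∀ n, 0 < r n)
    (hC : IsCliqueSet dist p r C)
    (hcpt : ∀ u : ℕ → (ℕ → X), (∀ j, u j ∈ C) → ∃ v ∈ C, ∃ φ : ℕ → ℕ, StrictMono φ ∧
      Tendsto (fun j => seqDist dist r (u (φ j)) v) atTop (𝓝 0)) :
    (∃ M : ℝ, ∀ x ∈ C, ∀ y ∈ C, seqDist dist r x y ≤ M) ∧
      ∃ u : ℕ → (ℕ → X), ∀ x ∈ C, ∀ ε > (0 : ℝ), ∃ j : ℕ,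
        u j ∈ C ∧ seqDist dist r x (u j) < ε := by
  let := hC.pseudoMetricSpace hr
  have hK : IsCompact (univ : Set (CliqueSpace C)) := by
    refine IsSeqCompact.isCompact fun u _ => ?_
    obtain ⟨v, hv, φ, hφ, hlim⟩ := hcpt (fun j => (u j).1) fun j => (u j).2
    exact ⟨⟨v, hv⟩, mem_univ _, φ, hφ, tendsto_iff_dist_tendsto_zero.2 hlim⟩
  refine ⟨?_, ?_⟩
  · obtain ⟨M, hM⟩ := Metric.isBounded_iff.1 hK.isBounded
    exact ⟨M, fun x hx y hy => hM (x := ⟨x, hx⟩) (mem_univ _) (y := ⟨y, hy⟩) (mem_univ _)⟩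
  · obtain ⟨t, -, htc, htd⟩ := hK.isSeparable.exists_countable_dense_subset
    rcases t.eq_empty_or_nonempty with rfl | hne
    · refine ⟨fun _ _ => p, fun x hx => ?_⟩
      have hx' := htd (mem_univ (⟨x, hx⟩ : CliqueSpace C))
      simp only [closure_empty] at hx'
      exact (notMem_empty _ hx').elim
    · obtain ⟨v, rfl⟩ := htc.exists_eq_range hne
      refine ⟨fun j => (v j).1, fun x hx ε hε => ?_⟩
      obtain ⟨_, ⟨j, rfl⟩, hj⟩ :=
        Metric.mem_closure_iff.1 (htd (mem_univ (⟨x, hx⟩ : CliqueSpace C))) ε hε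
      exact ⟨j, (v j).2, hj⟩

end Compactness

section NotPorous

variable {X : Type*} [PseudoMetricSpace X] {p : X} {r : ℕ → ℝ} {C : Set (ℕ → X)}

lemma exists_seq_dist_le_and_eventually_lt {c H : ℝ}
    (hmeet : ∀ b ≥ H, (Ioo (c * b) b ∩ range fun x : X => dist x p).Nonempty)
    {ρ : ℕ → ℝ} (hρ0 : ∀ n, 0 ≤ ρ n) (hρ : Tendsto ρ atTop atTop) :
    ∃ y : ℕ → X, (∀ n, dist (y n) p ≤ ρ n) ∧ ∀ᶠ n in atTop, c * ρ n < dist (y n) p := by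
  have hy : ∀ n, ∃ x : X, dist x p ≤ ρ n ∧ (H ≤ ρ n → c * ρ n < dist x p) := by
    intro n
    by_cases hn : H ≤ ρ n
    · obtain ⟨_, hx, x, rfl⟩ := hmeet _ hn
      exact ⟨x, hx.2.le, fun _ => hx.1⟩
    · exact ⟨p, by simpa using hρ0 n, fun h => absurd h hn⟩
  choose y hyle hygt using hy
  exact ⟨y, hyle, (hρ.eventually_ge_atTop H).mono hygt⟩

lemma IsCliqueSet.exists_subseq_mutStable (hr : ∀ n, 0 < r n) (hC : IsCliqueSet dist p r C)
    {u : ℕ → ℕ → X} (hu : ∀ x ∈ C, ∀ ε > (0 : ℝ), ∃ j, u j ∈ C ∧ seqDist dist r x (u j) < ε)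
    {y : ℕ → X} {t : ℝ} (hy : ∀ n, dist (y n) p / r n ≤ t) :
    ∃ φ : ℕ → ℕ, StrictMono φ ∧
      (∃ τ, Tendsto (fun k => dist (y (φ k)) p / r (φ k)) atTop (𝓝 τ)) ∧
      ∀ w ∈ C, MutStable dist (fun k => r (φ k)) (fun k => w (φ k)) fun k => y (φ k) := by
  let g : Option {j // u j ∈ C} → ℕ → ℝ
    | none, n => dist (y n) p / r n
    | some j, n => dist (u j n) (y n) / r n
  have hg : ∀ i, Bornology.IsBounded (range (g i)) := by
    rintro (_ | ⟨j, hj⟩) <;> refine isBounded_iff_forall_norm_le.2 ?_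
    · refine ⟨t, forall_mem_range.2 fun n => ?_⟩
      rw [Real.norm_of_nonneg (div_nonneg dist_nonneg (hr n).le)]
      exact hy n
    · obtain ⟨ℓ, hℓ⟩ := (hC.1 _ hj).2
      obtain ⟨B, hB⟩ := hℓ.bddAbove_range
      refine ⟨B + t, forall_mem_range.2 fun n => ?_⟩
      rw [Real.norm_of_nonneg (div_nonneg dist_nonneg (hr n).le)]
      exact (div_le_div_add_div (dist_triangle_right _ _ p) (hr n)).trans
        (add_le_add (hB ⟨n, rfl⟩) (hy n))
  obtain ⟨φ, hφ, hlim⟩ := exists_strictMono_forall_tendsto g hg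
  refine ⟨φ, hφ, hlim none, fun w hw => cauchySeq_tendsto_of_complete <|
    cauchySeq_of_forall_eventually_dist_lt fun ε hε => ?_⟩
  obtain ⟨j, hj, hwj⟩ := hu w hw ε hε
  obtain ⟨ℓ, hℓ⟩ := hlim (some ⟨j, hj⟩)
  refine ⟨_, hℓ.cauchySeq, ?_⟩
  filter_upwards [((hC.tendsto_seqDist hw hj).comp hφ.tendsto_atTop).eventually_lt_const hwj]
    with k hk
  rw [dist_div_div_of_pos (hr (φ k))]
  refine lt_of_le_of_lt (div_le_div_of_nonneg_right ?_ (hr (φ k)).le) hk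
  simpa using dist_dist_dist_le (w (φ k)) (y (φ k)) (u j (φ k)) (y (φ k))

theorem stronglyPorousAtInfty_of_bounded_separable_tangent
    (hX : ¬ Bornology.IsBounded (univ : Set X)) (hr : ScalingSeq r) (hC : IsTangent dist p r C)
    (hbdd : ∃ M : ℝ, ∀ x ∈ C, ∀ y ∈ C, seqDist dist r x y ≤ M)
    (hsep : ∃ u : ℕ → (ℕ → X), ∀ x ∈ C, ∀ ε > (0 : ℝ), ∃ j : ℕ,
      u j ∈ C ∧ seqDist dist r x (u j) < ε) :
    StronglyPorousAtInfty (range fun x : X => dist x p) := by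
  obtain ⟨M, hM⟩ := hbdd
  obtain ⟨u, hu⟩ := hsep
  have hCl := hC.1.1
  by_contra hS
  obtain ⟨c, hc, H, hmeet⟩ := exists_forall_Ioo_inter_nonempty hS
  obtain ⟨x₀, hx₀⟩ := hC.1.nonempty hr.1 (alphaZero_nonempty hX p hr).some_mem.1
  obtain ⟨L, hL⟩ := (hCl.1 x₀ hx₀).2
  have hM0 : 0 ≤ M := (seqDist_self r x₀).symm.le.trans (hM x₀ hx₀ x₀ hx₀)
  have hL0 : 0 ≤ L := ge_of_tendsto' hL fun n => div_nonneg dist_nonneg (hr.1 n).le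
  have hnear : ∀ w ∈ C, ∀ ℓ, Tendsto (fun n => dist (w n) p / r n) atTop (𝓝 ℓ) → ℓ ≤ M + L :=
    fun w hw ℓ hℓ => (le_of_tendsto_of_tendsto' hℓ ((hCl.tendsto_seqDist hw hx₀).add hL)
      fun n => div_le_div_add_div (dist_triangle _ _ _) (hr.1 n)).trans
        (by linarith [hM w hw x₀ hx₀])
  set t := (M + L + 1) / c
  have ht : 0 < t := by positivity
  have hct : c * t = M + L + 1 := mul_div_cancel₀ _ hc.ne'
  obtain ⟨y, hyle, hygt⟩ := exists_seq_dist_le_and_eventually_lt hmeet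
    (fun n => (mul_pos ht (hr.1 n)).le) (hr.2.const_mul_atTop ht)
  obtain ⟨φ, hφ, ⟨τ, hτ⟩, hst⟩ :=
    hCl.exists_subseq_mutStable hr.1 hu fun n => (div_le_iff₀ (hr.1 n)).2 (hyle n)
  have hφt := hφ.tendsto_atTop
  have hyadm : SeqAdm dist p (fun k => r (φ k)) fun k => y (φ k) :=
    ⟨tendsto_atTop_mono' _ ((hφt.eventually hygt).mono fun k hk => hk.le)
      (((hr.2.comp hφt).const_mul_atTop ht).const_mul_atTop hc), τ, hτ⟩
  have hτ_ge : M + L + 1 ≤ τ := ge_of_tendsto hτ <| (hφt.eventually hygt).mono fun k hk =>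
    (le_div_iff₀ (hr.1 (φ k))).2 (by rw [← hct, mul_assoc]; exact hk.le)
  obtain ⟨w, hw, hwy⟩ := hC.exists_seqEquiv_of_forall_mutStable hr.1 hφ hyadm hst
  obtain ⟨ℓ, hℓ⟩ := (hCl.1 w hw).2
  have hℓτ : ℓ = τ := tendsto_nhds_unique (hℓ.comp hφt)
    (tendsto_dist_div_of_seqEquiv (fun k => hr.1 (φ k)) hτ hwy.symm (seqEquiv_refl _))
  linarith [hnear w hw ℓ hℓ]

end NotPorous

lemma iff_and_iff_and_iff_of_cycle {a b c d e : Prop} (hab : a → b) (hbc : b → c) (hcd : c → d)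
    (hde : d → e) (hea : e → a) : (a ↔ b) ∧ (b ↔ c) ∧ (c ↔ d) ∧ (d ↔ e) :=
  ⟨⟨hab, hea ∘ hde ∘ hcd ∘ hbc⟩, ⟨hbc, hab ∘ hea ∘ hde ∘ hcd⟩, ⟨hcd, hbc ∘ hab ∘ hea ∘ hde⟩,
    ⟨hde, hcd ∘ hbc ∘ hab ∘ hea⟩⟩

/-- **Theorem 2.3.** Let `(X,d)` be an unbounded metric space and `p ∈ X`,
and let `S_p(X) = {d(x,p) : x ∈ X}`.  The following are equivalent:
(i)   `S_p(X)` is strongly porous at infinity;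
(ii)  there is a single-point tangent space `Ω^X_{∞,r̃}`;
(iii) there is a finite tangent space `Ω^X_{∞,r̃}`;
(iv)  there is a compact tangent space `Ω^X_{∞,r̃}`;
(v)   there is a bounded separable tangent space `Ω^X_{∞,r̃}`.
Here single-point means the clique is nonempty and all its members are equivalent;
finite means some `n` bounds the number of pairwise non-equivalent members; compact is
expressed as sequential compactness w.r.t. the metric `ρ = seqDist`; bounded and
separable are expressed w.r.t. `ρ` as well. -/
theorem strongly_porous_iff_finite_tangent {X : Type*} [MetricSpace X]
    (hX : ¬ Bornology.IsBounded (Set.univ : Set X)) (p : X) :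
    -- (i) ↔ (ii)
    ((StronglyPorousAtInfty (Set.range fun x : X => dist x p)) ↔
      (∃ r : ℕ → ℝ, ScalingSeq r ∧ ∃ C : Set (ℕ → X), IsTangent dist p r C ∧
        C.Nonempty ∧ ∀ x ∈ C, ∀ y ∈ C, SeqEquiv dist r x y)) ∧
    -- (ii) ↔ (iii)
    ((∃ r : ℕ → ℝ, ScalingSeq r ∧ ∃ C : Set (ℕ → X), IsTangent dist p r C ∧
        C.Nonempty ∧ ∀ x ∈ C, ∀ y ∈ C, SeqEquiv dist r x y) ↔
      (∃ r : ℕ → ℝ, ScalingSeq r ∧ ∃ C : Set (ℕ → X), IsTangent dist p r C ∧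
        ∃ n : ℕ, ∀ f : Fin (n + 1) → (ℕ → X), (∀ k, f k ∈ C) →
          ∃ k l, k ≠ l ∧ SeqEquiv dist r (f k) (f l))) ∧
    -- (iii) ↔ (iv)
    ((∃ r : ℕ → ℝ, ScalingSeq r ∧ ∃ C : Set (ℕ → X), IsTangent dist p r C ∧
        ∃ n : ℕ, ∀ f : Fin (n + 1) → (ℕ → X), (∀ k, f k ∈ C) →
          ∃ k l, k ≠ l ∧ SeqEquiv dist r (f k) (f l)) ↔
      (∃ r : ℕ → ℝ, ScalingSeq r ∧ ∃ C : Set (ℕ → X), IsTangent dist p r C ∧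
        ∀ u : ℕ → (ℕ → X), (∀ j, u j ∈ C) →
          ∃ v ∈ C, ∃ φ : ℕ → ℕ, StrictMono φ ∧
            Tendsto (fun j => seqDist dist r (u (φ j)) v) atTop (𝓝 0))) ∧
    -- (iv) ↔ (v)
    ((∃ r : ℕ → ℝ, ScalingSeq r ∧ ∃ C : Set (ℕ → X), IsTangent dist p r C ∧
        ∀ u : ℕ → (ℕ → X), (∀ j, u j ∈ C) →
          ∃ v ∈ C, ∃ φ : ℕ → ℕ, StrictMono φ ∧
            Tendsto (fun j => seqDist dist r (u (φ j)) v) atTop (𝓝 0)) ↔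
      (∃ r : ℕ → ℝ, ScalingSeq r ∧ ∃ C : Set (ℕ → X), IsTangent dist p r C ∧
        (∃ M : ℝ, ∀ x ∈ C, ∀ y ∈ C, seqDist dist r x y ≤ M) ∧
        (∃ u : ℕ → (ℕ → X), ∀ x ∈ C, ∀ ε > (0 : ℝ), ∃ j : ℕ,
          u j ∈ C ∧ seqDist dist r x (u j) < ε))) := by
  refine iff_and_iff_and_iff_of_cycle (exists_singlePoint_tangent_of_stronglyPorous hX p)
    ?_ ?_ ?_ ?_
  · rintro ⟨r, hr, C, hC, -, hequiv⟩
    exact ⟨r, hr, C, hC, 1, fun f hf => ⟨0, 1, by decide, hequiv _ (hf 0) _ (hf 1)⟩⟩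
  · rintro ⟨r, hr, C, hC, n, hn⟩
    exact ⟨r, hr, C, hC, exists_subseq_seqDist_tendsto_zero hr.1 hn⟩
  · rintro ⟨r, hr, C, hC, hcpt⟩
    exact ⟨r, hr, C, hC, hC.1.1.bounded_and_separable_of_seqCompact hr.1 hcpt⟩
  · rintro ⟨r, hr, C, hC, hbdd, hsep⟩
    exact stronglyPorousAtInfty_of_bounded_separable_tangent hX hr hC hbdd hsep
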